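/- Let V be a finite-dimensional real vector space. There exists a generalized complex structure on V — that is, an endomorphism J of V ⊕ V* satisfying J² = −1 and ⟨Ju, Jv⟩ = ⟨u, v⟩ for all u, v ∈ V ⊕ V* — if and only if the dimension of V is even. -/

import Mathlib

open Module

/-- The canonical symmetric bilinear form on `V ⊕ V*`,
`⟨X+ξ, Y+η⟩ = (1/2)(ξ(Y) + η(X))`. -/
noncomputable def canForm (V : Type*) [AddCommGroup V] [Module ℝ V] :
    LinearMap.BilinForm ℝ (V × Module.Dual ℝ V) :=
  LinearMap.mk₂ ℝ (fun p q => (p.2 q.1 + q.2 p.1) / 2)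
    (fun p p' q => by simp; ring)
    (fun c p q => by simp; ring)
    (fun p q q' => by simp; ring)
    (fun c p q => by simp; ring)

private theorem gcs_exists_posdef (V : Type*) [AddCommGroup V] [Module ℝ V]
    [FiniteDimensional ℝ V] :
    ∃ φ : V →ₗ[ℝ] Module.Dual ℝ V, ∀ X : V, X ≠ 0 → 0 < φ X X := by
  classical
  let bV := Module.finBasis ℝ V
  refine ⟨LinearMap.mk₂ ℝ (fun X Y => ∑ i, bV.repr X i * bV.repr Y i)
    (fun X X' Y => by
      simp only [map_add, Finsupp.add_apply, add_mul]
      rw [Finset.sum_add_distrib])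
    (fun c X Y => by
      simp only [map_smul, Finsupp.smul_apply, smul_eq_mul, Finset.mul_sum]
      exact Finset.sum_congr rfl fun i _ => by ring)
    (fun X Y Y' => by
      simp only [map_add, Finsupp.add_apply, mul_add]
      rw [Finset.sum_add_distrib])
    (fun c X Y => by
      simp only [map_smul, Finsupp.smul_apply, smul_eq_mul, Finset.mul_sum]
      exact Finset.sum_congr rfl fun i _ => by ring), ?_⟩
  intro X hX
  simp only [LinearMap.mk₂_apply]
  have hne : ∃ i, bV.repr X i ≠ 0 := by
    by_contra hc
    push_neg at hc
    have : bV.repr X = 0 := Finsupp.ext fun i => hc i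
    exact hX (by simpa using congrArg bV.repr.symm this)
  obtain ⟨i0, hi0⟩ := hne
  refine Finset.sum_pos' (fun i _ => mul_self_nonneg _) ⟨i0, Finset.mem_univ i0, ?_⟩
  exact mul_self_pos.mpr hi0

open Module

theorem aux_even (W : Type*) [AddCommGroup W] [Module ℝ W] [FiniteDimensional ℝ W]
    (n : ℕ) (hWdim : Module.finrank ℝ W = n + n)
    (B : LinearMap.BilinForm ℝ W)
    (hBsymm : ∀ u v, B u v = B v u)
    (hBnd : ∀ u, (∀ v, B u v = 0) → u = 0)
    (J : W →ₗ[ℝ] W) (hJJ : ∀ u, J (J u) = -u)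
    (hJo : ∀ u v, B (J u) (J v) = B u v)
    (Np Nn : Submodule ℝ W)
    (hNp : ∀ x ∈ Np, x ≠ 0 → 0 < B x x)
    (hNn : ∀ x ∈ Nn, x ≠ 0 → B x x < 0)
    (hNpd : Module.finrank ℝ Np = n)
    (hNnd : Module.finrank ℝ Nn = n) :
    Even n := by
  classical
  -- a J-invariant inner ℝ product built from a basis
  let bb := Module.finBasis ℝ W
  let g : W → W → ℝ := fun u v =>
    (∑ i, bb.repr u i * bb.repr v i) + (∑ i, bb.repr (J u) i * bb.repr (J v) i)
  have hgJ : ∀ u v, g (J u) (J v) = g u v := by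
    intro u v
    simp only [g, hJJ, map_neg, Finsupp.neg_apply, neg_mul_neg]
    exact add_comm _ _
  have hgsymm : ∀ u v, g u v = g v u := by
    intro u v; simp only [g]; congr 1 <;> exact Finset.sum_congr rfl fun i _ => mul_comm _ _
  letI core : InnerProductSpace.Core ℝ W :=
  { inner := fun u v => g u v
    conj_inner_symm := fun u v => by simpa using hgsymm v u
    re_inner_nonneg := fun u => by
      simp only [RCLike.re_to_real]
      exact add_nonneg (Finset.sum_nonneg fun i _ => mul_self_nonneg _)
        (Finset.sum_nonneg fun i _ => mul_self_nonneg _)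
    add_left := fun u v w => by
      simp only [g, map_add, Finsupp.add_apply, add_mul, Finset.sum_add_distrib]
      ring
    smul_left := fun u v c => by
      simp only [g, map_smul, Finsupp.smul_apply, smul_eq_mul, RCLike.conj_to_real]
      rw [mul_add, Finset.mul_sum, Finset.mul_sum]
      congr 1 <;> exact Finset.sum_congr rfl fun i _ => by ring
    definite := fun u hu => by
      simp only [g] at hu
      have ha : (0:ℝ) ≤ ∑ i, bb.repr u i * bb.repr u i :=
        Finset.sum_nonneg fun i _ => mul_self_nonneg _
      have hbn : (0:ℝ) ≤ ∑ i, bb.repr (J u) i * bb.repr (J u) i :=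
        Finset.sum_nonneg fun i _ => mul_self_nonneg _
      have h1 : (∑ i, bb.repr u i * bb.repr u i) = 0 := by linarith
      have h2 : ∀ i ∈ Finset.univ, bb.repr u i * bb.repr u i = 0 :=
        (Finset.sum_eq_zero_iff_of_nonneg fun i _ => mul_self_nonneg _).mp h1
      have : bb.repr u = 0 := by
        ext i
        have := h2 i (Finset.mem_univ i)
        simpa [mul_self_eq_zero] using this
      simpa using congrArg bb.repr.symm this }
  letI : NormedAddCommGroup W := core.toNormedAddCommGroup
  letI : InnerProductSpace ℝ W := InnerProductSpace.ofCore core.toCore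
  letI : CompleteSpace W := FiniteDimensional.complete ℝ W
  have hinner : ∀ u v : W, (inner ℝ u v : ℝ) = g u v := fun _ _ => rfl
  have hinnerJ : ∀ u v : W, (inner ℝ (J u) (J v) : ℝ) = inner ℝ u v := by
    intro u v; rw [hinner, hinner]; exact hgJ u v
  have hinnerJskew : ∀ u v : W, (inner ℝ (J u) v : ℝ) = -inner ℝ u (J v) := by
    intro u v
    have h1 : (inner ℝ (J (J u)) (J v) : ℝ) = inner ℝ (J u) v := hinnerJ (J u) v
    rw [hJJ, inner_neg_left] at h1
    linarith
  -- the operator S representing B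
  let S : W →ₗ[ℝ] W :=
  { toFun := fun u => (InnerProductSpace.toDual ℝ W).symm (LinearMap.toContinuousLinearMap (B u))
    map_add' := fun u v => by simp [map_add]
    map_smul' := fun c u => by simp [map_smul] }
  have hSB : ∀ u v : W, (inner ℝ (S u) v : ℝ) = B u v := by
    intro u v
    simp only [S, LinearMap.coe_mk, AddHom.coe_mk]
    rw [InnerProductSpace.toDual_symm_apply]
    simp
  have hSsym : S.IsSymmetric := by
    intro u v
    rw [hSB, real_inner_comm, hSB]
    exact hBsymm u v
  have hBJs : ∀ u v : W, B (J u) v = -B u (J v) := by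
    intro u v
    have h1 : B (J u) (J (J v)) = B u (J v) := hJo u (J v)
    rw [hJJ, map_neg] at h1
    linarith
  have hSJ : ∀ u : W, S (J u) = J (S u) := by
    intro u
    apply ext_inner_right ℝ
    intro v
    rw [hSB, hBJs, ← hSB, hinnerJskew]
  -- spectral decomposition
  let b := hSsym.eigenvectorBasis hWdim
  let μ := hSsym.eigenvalues hWdim
  have hSb : ∀ i, S (b i) = μ i • b i := fun i => by
    exact hSsym.apply_eigenvectorBasis hWdim i
  have hμ0 : ∀ i, μ i ≠ 0 := by
    intro i h
    have hs : S (b i) = 0 := by rw [hSb i, h, zero_smul]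
    have hb0 : b i = 0 := by
      apply hBnd
      intro v
      rw [← hSB, hs, inner_zero_left]
    exact b.toBasis.ne_zero i (by simpa [b.coe_toBasis] using hb0)
  -- quadratic form in eigen-coordinates
  have hBxx : ∀ x : W, B x x = ∑ i, μ i * ((inner ℝ (b i) x : ℝ) * (inner ℝ (b i) x : ℝ)) := by
    intro x
    rw [← hSB]
    rw [← b.sum_inner_mul_inner (S x) x]
    refine Finset.sum_congr rfl fun i _ => ?_
    have h1 : (inner ℝ (S x) (b i) : ℝ) = μ i * inner ℝ (b i) x := by
      rw [hSsym x (b i), hSb i, real_inner_smul_right, real_inner_comm]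
    rw [h1]; ring
  -- positive / negative coordinate sets
  let P : Finset (Fin (n + n)) := Finset.univ.filter (fun i => 0 < μ i)
  let Pc : Finset (Fin (n + n)) := Finset.univ.filter (fun i => ¬ 0 < μ i)
  let Qp : Submodule ℝ W := Submodule.span ℝ (⇑b '' ↑P)
  let Qn : Submodule ℝ W := Submodule.span ℝ (⇑b '' ↑Pc)
  have hspan : ∀ (s : Finset (Fin (n+n))) (x : W), x ∈ Submodule.span ℝ (⇑b '' ↑s) ↔
      ∀ i ∉ s, (inner ℝ (b i) x : ℝ) = 0 := by
    intro s x
    conv_lhs => rw [← b.coe_toBasis]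
    rw [Basis.mem_span_image]
    constructor
    · intro h i hi
      have : i ∉ (b.toBasis.repr x).support := fun hc => hi (h hc)
      have h0 : b.toBasis.repr x i = 0 := Finsupp.notMem_support_iff.mp this
      rw [b.coe_toBasis_repr_apply, b.repr_apply_apply] at h0
      exact h0
    · intro h i hi
      by_contra hc
      have h0 := h i hc
      rw [← b.repr_apply_apply, ← b.coe_toBasis_repr_apply] at h0
      
      exact (Finsupp.mem_support_iff.mp hi) h0
  have hcoordzero : ∀ x : W, (∀ i, (inner ℝ (b i) x : ℝ) = 0) → x = 0 := by
    intro x hx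
    have : ∀ i, b.toBasis.repr x i = 0 := by
      intro i
      rw [b.coe_toBasis_repr_apply, b.repr_apply_apply]
      exact hx i
    have hr : b.toBasis.repr x = 0 := Finsupp.ext fun i => this i
    simpa using congrArg b.toBasis.repr.symm hr
  -- B is positive definite on Qp, negative definite on Qn
  have hQppos : ∀ x ∈ Qp, x ≠ 0 → 0 < B x x := by
    intro x hx hx0
    rw [hBxx]
    have hmem := (hspan P x).mp hx
    obtain ⟨i0, hi0⟩ : ∃ i, (inner ℝ (b i) x : ℝ) ≠ 0 := by
      by_contra hc
      push_neg at hc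
      exact hx0 (hcoordzero x hc)
    have hi0P : i0 ∈ P := by
      by_contra hc
      exact hi0 (hmem i0 hc)
    refine Finset.sum_pos' (fun i _ => ?_) ⟨i0, Finset.mem_univ i0, ?_⟩
    · by_cases hiP : i ∈ P
      · have h1 : 0 < μ i := (Finset.mem_filter.mp hiP).2
        exact mul_nonneg h1.le (mul_self_nonneg _)
      · rw [hmem i hiP]; ring_nf; exact le_refl 0
    · have hμpos : 0 < μ i0 := (Finset.mem_filter.mp hi0P).2
      have h3 : 0 < (inner ℝ (b i0) x : ℝ) * (inner ℝ (b i0) x : ℝ) :=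
        mul_self_pos.mpr hi0
      exact mul_pos hμpos h3
  have hQnneg : ∀ x ∈ Qn, x ≠ 0 → B x x < 0 := by
    intro x hx hx0
    rw [hBxx]
    have hmem := (hspan Pc x).mp hx
    obtain ⟨i0, hi0⟩ : ∃ i, (inner ℝ (b i) x : ℝ) ≠ 0 := by
      by_contra hc
      push_neg at hc
      exact hx0 (hcoordzero x hc)
    have hi0P : i0 ∈ Pc := by
      by_contra hc
      exact hi0 (hmem i0 hc)
    have hneg : 0 < ∑ i, -(μ i * ((inner ℝ (b i) x : ℝ) * (inner ℝ (b i) x : ℝ))) := by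
      refine Finset.sum_pos' (fun i _ => ?_) ⟨i0, Finset.mem_univ i0, ?_⟩
      · by_cases hiP : i ∈ Pc
        · have h1 : ¬ 0 < μ i := (Finset.mem_filter.mp hiP).2
          have h2 : μ i < 0 := lt_of_le_of_ne (not_lt.mp h1) (hμ0 i)
          nlinarith [mul_self_nonneg (inner ℝ (b i) x : ℝ)]
        · rw [hmem i hiP]; ring_nf; exact le_refl 0
      · have h1 : ¬ 0 < μ i0 := (Finset.mem_filter.mp hi0P).2
        have h2 : μ i0 < 0 := lt_of_le_of_ne (not_lt.mp h1) (hμ0 i0)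
        have h3 : 0 < (inner ℝ (b i0) x : ℝ) * (inner ℝ (b i0) x : ℝ) :=
          mul_self_pos.mpr hi0
        nlinarith
    rw [Finset.sum_neg_distrib] at hneg
    linarith
  -- dimension of spans
  have hdim : ∀ s : Finset (Fin (n+n)),
      Module.finrank ℝ (Submodule.span ℝ (⇑b '' ↑s)) = s.card := by
    intro s
    have li0 := b.toBasis.linearIndependent.comp
      (Subtype.val : (↑s : Set (Fin (n+n))) → _) Subtype.val_injective
    rw [b.coe_toBasis] at li0
    have h1 := finrank_span_eq_card li0
    rw [Set.range_comp, Subtype.range_coe] at h1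
    rw [h1]
    simp
  -- dimension bound from definiteness
  have hbound : ∀ (Q Nq : Submodule ℝ W), (∀ x ∈ Q, x ≠ 0 → 0 < B x x) →
      (∀ x ∈ Nq, x ≠ 0 → B x x < 0) →
      Module.finrank ℝ Q + Module.finrank ℝ Nq ≤ n + n := by
    intro Q Nq hQ hNq
    have hdisj : Q ⊓ Nq = ⊥ := by
      rw [Submodule.eq_bot_iff]
      intro x hx
      obtain ⟨hx1, hx2⟩ := Submodule.mem_inf.mp hx
      by_contra hx0
      have := hQ x hx1 hx0
      have := hNq x hx2 hx0
      linarith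
    have h1 := Submodule.finrank_sup_add_finrank_inf_eq Q Nq
    rw [hdisj, finrank_bot] at h1
    have h2 : Module.finrank ℝ ↥(Q ⊔ Nq) ≤ Module.finrank ℝ W := Submodule.finrank_le _
    rw [hWdim] at h2
    omega
  -- card P = n
  have hPle : P.card ≤ n := by
    have := hbound Qp Nn hQppos hNn
    rw [hNnd] at this
    have hq : Module.finrank ℝ ↥Qp = P.card := hdim P
    omega
  have hPcle : Pc.card ≤ n := by
    have := hbound Np Qn hNp hQnneg
    rw [hNpd] at this
    have hq : Module.finrank ℝ ↥Qn = Pc.card := hdim Pc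
    omega
  have hsum : P.card + Pc.card = n + n := by
    have := Finset.card_filter_add_card_filter_not
      (s := (Finset.univ : Finset (Fin (n+n)))) (p := fun i => 0 < μ i)
    simpa [P, Pc] using this
  have hPn : P.card = n := by omega
  -- J-invariance of Qp
  have hJQp : ∀ x ∈ Qp, J x ∈ Qp := by
    intro x hx
    have hx' := (hspan P x).mp hx
    apply (hspan P (J x)).mpr
    intro i hi
    have h1 : (inner ℝ (b i) (J x) : ℝ) = - inner ℝ (J (b i)) x := by
      rw [hinnerJskew (b i) x]; ring
    rw [h1, ← b.sum_inner_mul_inner (J (b i)) x, neg_eq_zero]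
    apply Finset.sum_eq_zero
    intro j _
    by_cases hj : j ∈ P
    · have c1 : (inner ℝ (S (J (b i))) (b j) : ℝ) = μ j * inner ℝ (J (b i)) (b j) := by
        rw [hSsym, hSb j, real_inner_smul_right]
      have c2 : (inner ℝ (S (J (b i))) (b j) : ℝ) = μ i * inner ℝ (J (b i)) (b j) := by
        rw [hSJ (b i), hSb i, map_smul, real_inner_smul_left]
      have e1 : μ i * (inner ℝ (J (b i)) (b j) : ℝ) = μ j * inner ℝ (J (b i)) (b j) :=
        c2.symm.trans c1
      have hμij : μ i ≠ μ j := by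
        have hiP : ¬ 0 < μ i := fun h => hi (Finset.mem_filter.mpr ⟨Finset.mem_univ i, h⟩)
        have hjP : 0 < μ j := (Finset.mem_filter.mp hj).2
        have hlt : μ i < 0 := lt_of_le_of_ne (not_lt.mp hiP) (hμ0 i)
        exact ne_of_lt (lt_trans hlt hjP)
      have horto : (inner ℝ (J (b i)) (b j) : ℝ) = 0 := by
        by_contra ht
        exact hμij (mul_right_cancel₀ ht e1)
      rw [horto, zero_mul]
    · rw [hx' j hj, mul_zero]
  -- restrict J to Qp and use the determinant
  let J' : Qp →ₗ[ℝ] Qp := J.restrict hJQp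
  have hJ'c : J' ∘ₗ J' = -LinearMap.id := by
    apply LinearMap.ext
    intro y
    apply Subtype.ext
    simp [J', LinearMap.restrict_apply, hJJ]
  have hdet : LinearMap.det J' * LinearMap.det J' = (-1 : ℝ) ^ (Module.finrank ℝ ↥Qp) := by
    rw [← LinearMap.det_comp, hJ'c]
    have hneg : (-LinearMap.id : Qp →ₗ[ℝ] Qp) = (-1 : ℝ) • LinearMap.id :=
      (neg_one_smul ℝ _).symm
    rw [hneg, LinearMap.det_smul, LinearMap.det_id, mul_one]
  have heven : Even (Module.finrank ℝ ↥Qp) := by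
    by_contra hodd
    have hodd' : Odd (Module.finrank ℝ ↥Qp) := Nat.not_even_iff_odd.mp hodd
    rw [hodd'.neg_one_pow] at hdet
    nlinarith [mul_self_nonneg (LinearMap.det J')]
  have hfin : Module.finrank ℝ ↥Qp = P.card := hdim P
  rw [hfin, hPn] at heven
  exact heven


theorem gcs_of_even (V : Type*) [AddCommGroup V] [Module ℝ V] [FiniteDimensional ℝ V]
    (h : Even (Module.finrank ℝ V)) :
    ∃ J : (V × Module.Dual ℝ V) →ₗ[ℝ] (V × Module.Dual ℝ V),
        J ∘ₗ J = -LinearMap.id ∧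
        ∀ u v : V × Module.Dual ℝ V, canForm V (J u) (J v) = canForm V u v := by
  obtain ⟨m, hm⟩ := h
  -- V ≃ (Fin m → ℂ) as real vector spaces
  have hdim : Module.finrank ℝ V = Module.finrank ℝ (Fin m → ℂ) := by
    simp [Module.finrank_pi_fintype, Complex.finrank_real_complex, hm]; ring
  let e : V ≃ₗ[ℝ] (Fin m → ℂ) := LinearEquiv.ofFinrankEq _ _ hdim
  let mulI : (Fin m → ℂ) →ₗ[ℝ] (Fin m → ℂ) :=
    ((Complex.I • LinearMap.id : (Fin m → ℂ) →ₗ[ℂ] (Fin m → ℂ))).restrictScalars ℝ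
  let JV : V →ₗ[ℝ] V := (e.symm.toLinearMap) ∘ₗ mulI ∘ₗ e.toLinearMap
  have hJV : ∀ x, JV (JV x) = -x := by
    intro x
    simp only [JV, mulI, LinearMap.comp_apply, LinearEquiv.coe_coe,
      LinearMap.restrictScalars_apply, LinearMap.smul_apply, LinearMap.id_apply,
      LinearEquiv.apply_symm_apply, smul_smul, Complex.I_mul_I, neg_one_smul, map_neg,
      LinearEquiv.symm_apply_apply]
  refine ⟨JV.prodMap (-JV.dualMap), ?_, ?_⟩
  · apply LinearMap.ext
    rintro ⟨X, ξ⟩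
    refine Prod.ext ?_ (LinearMap.ext fun x => ?_)
    · simp [hJV]
    · simp [LinearMap.dualMap_apply, hJV, map_neg]
  · rintro ⟨X, ξ⟩ ⟨Y, η⟩
    simp [canForm, LinearMap.prodMap_apply, LinearMap.dualMap_apply, hJV]


/-- A finite-dimensional real vector space `V` admits a generalized complex
structure — an endomorphism `J` of `V ⊕ V*` with `J² = −1` which is orthogonal
for the canonical bilinear form — if and only if `dim V` is even. -/
theorem exists_generalized_complex_structure_iff_even
    (V : Type*) [AddCommGroup V] [Module ℝ V] [FiniteDimensional ℝ V] :
    (∃ J : (V × Module.Dual ℝ V) →ₗ[ℝ] (V × Module.Dual ℝ V),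
        J ∘ₗ J = -LinearMap.id ∧
        ∀ u v : V × Module.Dual ℝ V, canForm V (J u) (J v) = canForm V u v) ↔
      Even (Module.finrank ℝ V) := by
  constructor
  · rintro ⟨J, hJ2, hJo⟩
    obtain ⟨φ, hφpos⟩ := gcs_exists_posdef V
    have hinj : ∀ ψ : V →ₗ[ℝ] Module.Dual ℝ V,
        Function.Injective (LinearMap.prod LinearMap.id ψ) := by
      intro ψ X Y h
      simpa using congrArg Prod.fst h
    have hrank : ∀ ψ : V →ₗ[ℝ] Module.Dual ℝ V,
        Module.finrank ℝ (LinearMap.range (LinearMap.prod LinearMap.id ψ)) =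
          Module.finrank ℝ V := fun ψ => LinearMap.finrank_range_of_inj (hinj ψ)
    refine aux_even (V × Module.Dual ℝ V) (Module.finrank ℝ V) ?_ (canForm V) ?_ ?_ J ?_ hJo
      (LinearMap.range (LinearMap.prod LinearMap.id φ))
      (LinearMap.range (LinearMap.prod LinearMap.id (-φ))) ?_ ?_ (hrank φ) (hrank (-φ))
    · rw [Module.finrank_prod, Subspace.dual_finrank_eq]
    · intro u v; simp [canForm]; ring
    · rintro ⟨X, ξ⟩ h
      have h1 : ∀ Y : V, ξ Y = 0 := by
        intro Y
        have := h (Y, 0)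
        simp [canForm] at this
        linarith [this]
      have h2 : X = 0 := by
        rw [← Module.forall_dual_apply_eq_zero_iff ℝ X]
        intro η
        have := h (0, η)
        simp [canForm] at this
        linarith [this]
      exact Prod.ext h2 (LinearMap.ext h1)
    · intro u
      have := LinearMap.ext_iff.mp hJ2 u
      simpa using this
    · rintro x hx hx0
      obtain ⟨X, rfl⟩ := hx
      have hX : X ≠ 0 := by
        rintro rfl
        simp at hx0
      have := hφpos X hX
      simp only [LinearMap.prod_apply, LinearMap.id_coe, id_eq, Function.prod, canForm,
        LinearMap.mk₂_apply]
      linarith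
    · rintro x hx hx0
      obtain ⟨X, rfl⟩ := hx
      have hX : X ≠ 0 := by
        rintro rfl
        simp at hx0
      have := hφpos X hX
      simp only [LinearMap.prod_apply, LinearMap.id_coe, id_eq, Function.prod, canForm,
        LinearMap.mk₂_apply, LinearMap.neg_apply]
      linarith
  · exact gcs_of_even V
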